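/- arXiv:2408.00131 — 4 statements merged into one kernel-verified Lean document; each statement's English description precedes it below -/
import Mathlib

section
/- Let A be a nonempty subset of ℝ^d, let x_1, …, x_N be points of ℝ^d, and let λ ≥ 0. Then the supremum over all tuples (y_1, …, y_N) in (ℝ^d)^N of the quantity (indicator that y_n ∈ A for at least one n) − λ ∑_{n=1}^N ‖y_n − x_n‖ equals (1 − λ · min_{1 ≤ n ≤ N} dist(x_n, A))^+, where dist(x, A) = inf_{z ∈ A} ‖z − x‖. -/
/-!
If some `y n` lies in `A`, the cost `lam * ∑ ‖y i - x i‖` is at least `lam * dist (x n, A)`,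
so the payoff is at most `1 - lam * minₙ dist (x n, A)`; otherwise it is at most `0`.
Conversely `y = x` has payoff `≥ 0`, and moving only `x n` to a point `z ∈ A` has payoff
`1 - lam * dist (x n) z`, which approaches `1 - lam * dist (x n, A)`.
-/

open Classical Set Metric

section HitPayoff

variable {ι E : Type*} [Fintype ι] [SeminormedAddCommGroup E]
  (A : Set E) (x : ι → E) (lam : ℝ)

noncomputable def hitPayoff (y : ι → E) : ℝ :=
  (if ∃ n, y n ∈ A then (1 : ℝ) else 0) - lam * ∑ n, ‖y n - x n‖

variable {A x lam}

theorem iInf_infDist_le_sum_norm {y : ι → E} {n : ι} (hy : y n ∈ A) :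
    ⨅ i, infDist (x i) A ≤ ∑ i, ‖y i - x i‖ :=
  calc ⨅ i, infDist (x i) A ≤ infDist (x n) A := ciInf_le (finite_range _).bddBelow n
    _ ≤ dist (x n) (y n) := infDist_le_dist_of_mem hy
    _ = ‖y n - x n‖ := by rw [dist_comm, dist_eq_norm]
    _ ≤ ∑ i, ‖y i - x i‖ :=
      Finset.single_le_sum (f := fun i => ‖y i - x i‖) (fun i _ => norm_nonneg _)
        (Finset.mem_univ n)

theorem hitPayoff_le (hlam : 0 ≤ lam) (y : ι → E) :
    hitPayoff A x lam y ≤ max (1 - lam * ⨅ i, infDist (x i) A) 0 := by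
  unfold hitPayoff
  split_ifs with hit
  · obtain ⟨n, hn⟩ := hit
    have := iInf_infDist_le_sum_norm (x := x) hn
    exact le_max_of_le_left (by gcongr)
  · have : 0 ≤ lam * ∑ i, ‖y i - x i‖ := by positivity
    exact le_max_of_le_right (by linarith)

theorem hitPayoff_self_nonneg : 0 ≤ hitPayoff A x lam x := by
  simp only [hitPayoff, sub_self, norm_zero, Finset.sum_const_zero, mul_zero, sub_zero]
  split_ifs <;> norm_num

theorem hitPayoff_update_of_mem {z : E} (hz : z ∈ A) (n : ι) :
    hitPayoff A x lam (Function.update x n z) = 1 - lam * dist (x n) z := by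
  rw [hitPayoff, if_pos ⟨n, by rwa [Function.update_self]⟩,
    Finset.sum_eq_single n (fun i _ hi => by rw [Function.update_of_ne hi, sub_self, norm_zero])
      (fun h => absurd (Finset.mem_univ n) h),
    Function.update_self, dist_comm, dist_eq_norm]

theorem csSup_range_hitPayoff [Nonempty ι] (hA : A.Nonempty) (hlam : 0 ≤ lam) :
    sSup (range (hitPayoff A x lam)) = max (1 - lam * ⨅ i, infDist (x i) A) 0 := by
  have hbdd : BddAbove (range (hitPayoff A x lam)) :=
    ⟨_, forall_mem_range.2 (hitPayoff_le hlam)⟩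
  refine le_antisymm (csSup_le (range_nonempty _) (forall_mem_range.2 (hitPayoff_le hlam)))
    (max_le ?_ (le_csSup_of_le hbdd (mem_range_self x) hitPayoff_self_nonneg))
  have : Nonempty A := hA.to_subtype
  -- `1 - sSup` bounds every `lam * dist (x n) z` with `z ∈ A`, hence their double infimum.
  rw [sub_le_comm, Real.mul_iInf_of_nonneg hlam]
  refine le_ciInf fun n => ?_
  rw [infDist_eq_iInf, Real.mul_iInf_of_nonneg hlam]
  refine le_ciInf fun z => sub_le_comm.1 ?_
  rw [← hitPayoff_update_of_mem z.2 n]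
  exact le_csSup hbdd (mem_range_self _)

end HitPayoff

/-- inner maximization identity for the rare-set probability dual:
`sup_y [1{∃ n, y n ∈ A} − λ ∑ ‖y n − x n‖] = (1 − λ · min_n dist(x_n, A))⁺`. -/
theorem stmt_3 (d N : ℕ) (hN : 0 < N) (A : Set (Fin d → ℝ)) (hA : A.Nonempty)
    (x : Fin N → Fin d → ℝ) (lam : ℝ) (hlam : 0 ≤ lam) :
    sSup {v : ℝ | ∃ y : Fin N → Fin d → ℝ,
        v = (if ∃ n, y n ∈ A then (1 : ℝ) else 0) - lam * ∑ n, ‖y n - x n‖}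
      = max (1 - lam * ⨅ n, Metric.infDist (x n) A) 0 := by
  have : Nonempty (Fin N) := ⟨⟨0, hN⟩⟩
  rw [← csSup_range_hitPayoff hA hlam]
  -- `congr!` reconciles the `Decidable` instances of the two `if`s.
  exact congrArg sSup (Set.ext fun v => exists_congr fun y => by rw [hitPayoff, eq_comm]; congr!)
end

section
/- Let N be a positive integer and let a_1, …, a_N and v_1, …, v_N be real numbers. Then the infimum, over all tuples (u_1, …, u_N) of real numbers such that u_n ≥ a_n for at least one index n, of ∑_{n=1}^N |u_n − v_n|, equals min_{1 ≤ n ≤ N} (a_n − v_n)^+, and this infimum is attained. -/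
/-- the minimal cost (in the mark coordinate) to move a configuration
`(a_n, v_n)` so that some point satisfies `u_n ≥ a_n` is `min_n (a_n − v_n)⁺`,
and this infimum is attained. -/
theorem stmt_6 (N : ℕ) (hN : 0 < N) (a v : Fin N → ℝ) :
    IsLeast {c : ℝ | ∃ u : Fin N → ℝ, (∃ n, a n ≤ u n) ∧ c = ∑ n, |u n - v n|}
      (⨅ n, max (a n - v n) 0) := by
  haveI : Nonempty (Fin N) := ⟨⟨0, hN⟩⟩
  obtain ⟨m, hm⟩ := Finite.exists_min (fun n => max (a n - v n) 0)
  have hinf : (⨅ n, max (a n - v n) 0) = max (a m - v m) 0 := by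
    apply le_antisymm
    · exact ciInf_le (Finite.bddBelow_range _) m
    · exact le_ciInf hm
  constructor
  · refine ⟨fun n => if n = m then max (v m) (a m) else v n, ⟨m, by simp⟩, ?_⟩
    rw [hinf, Finset.sum_eq_single m]
    · have hb : (fun n => if n = m then v m ⊔ a m else v n) m = v m ⊔ a m := by simp
      rw [hb]
      have h1 : max (v m) (a m) - v m = max 0 (a m - v m) := by
        rcases le_total (v m) (a m) with h | h
        · rw [max_eq_right h, max_eq_right (by linarith : (0:ℝ) ≤ a m - v m)]
        · rw [max_eq_left h, max_eq_left (by linarith : a m - v m ≤ 0), sub_self]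
      rw [h1, abs_of_nonneg (le_max_left 0 (a m - v m)), max_comm (a m - v m) 0]
    · intro n _ hn
      simp [hn]
    · intro h
      exact absurd (Finset.mem_univ m) h
  · rintro c ⟨u, ⟨n, hn⟩, rfl⟩
    have h1 : max (a n - v n) 0 ≤ |u n - v n| := by
      apply max_le
      · exact le_trans (by linarith) (le_abs_self _)
      · exact abs_nonneg _
    calc (⨅ n, max (a n - v n) 0) ≤ max (a n - v n) 0 :=
            ciInf_le (Finite.bddBelow_range _) n
      _ ≤ |u n - v n| := h1
      _ ≤ ∑ n, |u n - v n| :=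
            Finset.single_le_sum (f := fun i => |u i - v i|) (fun i _ => abs_nonneg _) (Finset.mem_univ n)
end

section
/- Let S be an integrable real-valued random variable on a probability space, let α ∈ (0,1), let δ ≥ 0, and let q be a real number with P(S ≤ q) = α. Then the infimum over all real z of the quantity (δ + E[(S − z)^+])/(1 − α) + z equals δ/(1 − α) + E[S · 1_{S > q}]/(1 − α), and this infimum is attained at z = q. -/
/-! The map `z ↦ (s - z)⁺` is convex with subgradient `-1_{s > q}` at `z = q`, so integrating gives
`E[(S - z)⁺] ≥ E[(S - q)⁺] + (q - z) P(S > q) = E[(S - q)⁺] + (q - z)(1 - α)`. After dividing by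
`1 - α` the `z`-terms cancel, so the objective at `z` is at least its value at `q`, and there
`E[(S - q)⁺] = E[S 1_{S > q}] - q (1 - α)` gives the closed form. -/

open MeasureTheory

theorem max_sub_zero_add_ite_le (s q z : ℝ) :
    max (s - q) 0 + (if q < s then q - z else 0) ≤ max (s - z) 0 := by
  split_ifs with h
  · rw [max_eq_left (by linarith)]
    linarith [le_max_left (s - z) 0]
  · rw [max_eq_right (by linarith)]
    linarith [le_max_right (s - z) 0]

section

variable {Ω : Type*} [MeasurableSpace Ω] {P : Measure Ω} [IsFiniteMeasure P] {S : Ω → ℝ}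

theorem integral_max_sub_zero_eq (hS : Integrable S P) (q : ℝ) :
    ∫ ω, max (S ω - q) 0 ∂P
      = ∫ ω in {ω | q < S ω}, S ω ∂P - q * P.real {ω | q < S ω} := by
  have hT : NullMeasurableSet {ω | q < S ω} P :=
    nullMeasurableSet_lt aemeasurable_const hS.aemeasurable
  have hmax : (fun ω => max (S ω - q) 0) = {ω | q < S ω}.indicator (fun ω => S ω - q) := by
    ext ω
    by_cases h : q < S ω
    · simp [h, le_of_lt (sub_pos.2 h)]
    · simp [h, sub_nonpos.2 (not_lt.1 h)]
  rw [hmax, integral_indicator₀ hT, integral_sub hS.integrableOn (integrableOn_const),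
    setIntegral_const, smul_eq_mul, mul_comm]

theorem integral_max_sub_zero_add_le (hS : Integrable S P) (q z : ℝ) :
    ∫ ω, max (S ω - q) 0 ∂P + (q - z) * P.real {ω | q < S ω} ≤ ∫ ω, max (S ω - z) 0 ∂P := by
  have hT : NullMeasurableSet {ω | q < S ω} P :=
    nullMeasurableSet_lt aemeasurable_const hS.aemeasurable
  have hmax : ∀ c, Integrable (fun ω => max (S ω - c) 0) P :=
    fun c => (hS.sub (integrable_const c)).pos_part
  have hind : Integrable ({ω | q < S ω}.indicator fun _ => q - z) P :=
    (integrable_const _).indicator₀ hT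
  have hint : ∫ ω, {ω | q < S ω}.indicator (fun _ => q - z) ω ∂P
      = (q - z) * P.real {ω | q < S ω} := by
    rw [integral_indicator₀ hT, setIntegral_const, smul_eq_mul, mul_comm]
  rw [← hint, ← integral_add (hmax q) hind]
  refine integral_mono ((hmax q).add hind) (hmax z) fun ω => ?_
  simpa only [Pi.add_apply, Set.indicator_apply, Set.mem_ofPred_eq]
    using max_sub_zero_add_ite_le (S ω) q z

end

theorem measureReal_lt_eq_one_sub {Ω : Type*} [MeasurableSpace Ω] {P : Measure Ω}
    [IsProbabilityMeasure P] {S : Ω → ℝ} (hS : AEMeasurable S P) {q α : ℝ} (hα : 0 ≤ α)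
    (hq : P {ω | S ω ≤ q} = ENNReal.ofReal α) :
    P.real {ω | q < S ω} = 1 - α := by
  have hcompl : {ω | q < S ω} = {ω | S ω ≤ q}ᶜ := by ext; simp
  rw [hcompl, measureReal_compl₀ (nullMeasurableSet_le hS aemeasurable_const), probReal_univ,
    measureReal_def, hq, ENNReal.toReal_ofReal hα]

theorem stmt_7_general {Ω : Type*} [MeasurableSpace Ω] (P : Measure Ω)
    [IsProbabilityMeasure P] (S : Ω → ℝ) (hS : Integrable S P)
    (α : ℝ) (hα : α ∈ Set.Ioo (0 : ℝ) 1) (δ : ℝ)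
    (q : ℝ) (hq : P {ω | S ω ≤ q} = ENNReal.ofReal α) :
    IsLeast {v : ℝ | ∃ z : ℝ, v = (δ + ∫ ω, max (S ω - z) 0 ∂P) / (1 - α) + z}
      (δ / (1 - α) + (∫ ω in {ω | q < S ω}, S ω ∂P) / (1 - α)) ∧
    (δ + ∫ ω, max (S ω - q) 0 ∂P) / (1 - α) + q
      = δ / (1 - α) + (∫ ω in {ω | q < S ω}, S ω ∂P) / (1 - α) := by
  have hc : 0 < 1 - α := sub_pos.2 hα.2
  have htail := measureReal_lt_eq_one_sub hS.aemeasurable hα.1.le hq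
  have hvalue : (δ + ∫ ω, max (S ω - q) 0 ∂P) / (1 - α) + q
      = δ / (1 - α) + (∫ ω in {ω | q < S ω}, S ω ∂P) / (1 - α) := by
    rw [integral_max_sub_zero_eq hS, htail]
    field_simp
    ring
  refine ⟨⟨⟨q, hvalue.symm⟩, ?_⟩, hvalue⟩
  rintro v ⟨z, rfl⟩
  have hle := integral_max_sub_zero_add_le hS q z
  rw [htail] at hle
  calc δ / (1 - α) + (∫ ω in {ω | q < S ω}, S ω ∂P) / (1 - α)
      = (δ + ∫ ω, max (S ω - q) 0 ∂P + (q - z) * (1 - α)) / (1 - α) + z := by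
        rw [← hvalue]; field_simp; ring
    _ ≤ (δ + ∫ ω, max (S ω - z) 0 ∂P) / (1 - α) + z := by
        gcongr ?_ / _ + _; linarith

/-- final optimization step of the DRO CVaR dual. If `P(S ≤ q) = α`,
then `inf_z [(δ + E[(S−z)⁺])/(1−α) + z] = δ/(1−α) + E[S·1_{S>q}]/(1−α)`, and the
infimum is attained at `z = q`. -/
theorem stmt_7 {Ω : Type*} [MeasurableSpace Ω] (P : Measure Ω)
    [IsProbabilityMeasure P] (S : Ω → ℝ) (hS : Integrable S P)
    (α : ℝ) (hα : α ∈ Set.Ioo (0 : ℝ) 1) (δ : ℝ) (hδ : 0 ≤ δ)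
    (q : ℝ) (hq : P {ω | S ω ≤ q} = ENNReal.ofReal α) :
    IsLeast {v : ℝ | ∃ z : ℝ, v = (δ + ∫ ω, max (S ω - z) 0 ∂P) / (1 - α) + z}
      (δ / (1 - α) + (∫ ω in {ω | q < S ω}, S ω ∂P) / (1 - α)) ∧
    (δ + ∫ ω, max (S ω - q) 0 ∂P) / (1 - α) + q
      = δ / (1 - α) + (∫ ω in {ω | q < S ω}, S ω ∂P) / (1 - α) :=
  stmt_7_general P S hS α hα δ q hq
end

section
/- Let X be a measurable space, let c : X × X → [0, ∞] and ℓ : X → ℝ and g : X → ℝ be measurable, with ℓ integrable with respect to ν and g integrable with respect to μ, where μ and ν are probability measures on X. Let λ ≥ 0 and δ ≥ 0, and suppose γ is a coupling of μ and ν (a probability measure on X × X whose first marginal is μ and second marginal is ν) satisfying ∫ c dγ ≤ δ. If ℓ(z) ≤ g(x) + λ c(x, z) for all x, z ∈ X, then ∫ ℓ dν ≤ λδ + ∫ g dμ. -/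
open MeasureTheory
open scoped ENNReal

/-!
Integrate the pointwise bound `ℓ(z) - g(x) ≤ λ c(x, z)` against the coupling `γ`: since the
marginals of `γ` are `μ` and `ν`, the left side integrates to `∫ ℓ dν - ∫ g dμ`, while the right
side integrates to `λ ∫ c dγ ≤ λ δ`. As `c` is `ℝ≥0∞`-valued, the comparison is made between
lower Lebesgue integrals of the positive part of `ℓ(z) - g(x)` and of `λ c`.
-/

namespace MeasureTheory

variable {α β E : Type*} [MeasurableSpace α] [MeasurableSpace β] [NormedAddCommGroup E]

section Marginals

variable {γ : Measure (α × β)}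

theorem Integrable.comp_fst_of_integrable_fst {f : α → E} (hf : Integrable f γ.fst) :
    Integrable (fun p => f p.1) γ :=
  (integrable_map_measure hf.aestronglyMeasurable measurable_fst.aemeasurable).mp hf

theorem Integrable.comp_snd_of_integrable_snd {f : β → E} (hf : Integrable f γ.snd) :
    Integrable (fun p => f p.2) γ :=
  (integrable_map_measure hf.aestronglyMeasurable measurable_snd.aemeasurable).mp hf

theorem integral_comp_fst_eq [NormedSpace ℝ E] {f : α → E} (hf : AEStronglyMeasurable f γ.fst) :
    ∫ p, f p.1 ∂γ = ∫ x, f x ∂γ.fst :=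
  (integral_map measurable_fst.aemeasurable hf).symm

theorem integral_comp_snd_eq [NormedSpace ℝ E] {f : β → E} (hf : AEStronglyMeasurable f γ.snd) :
    ∫ p, f p.2 ∂γ = ∫ y, f y ∂γ.snd :=
  (integral_map measurable_snd.aemeasurable hf).symm

end Marginals

theorem integral_le_of_lintegral_ofReal_le {μ : Measure α} {f : α → ℝ} {b : ℝ} (hb : 0 ≤ b)
    (hf : Integrable f μ) (h : ∫⁻ a, ENNReal.ofReal (f a) ∂μ ≤ ENNReal.ofReal b) :
    ∫ a, f a ∂μ ≤ b := by
  rw [integral_eq_lintegral_pos_part_sub_lintegral_neg_part hf]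
  exact (sub_le_self _ ENNReal.toReal_nonneg).trans (ENNReal.toReal_le_of_le_ofReal hb h)

end MeasureTheory

theorem stmt_15_general {X : Type*} [MeasurableSpace X] (μ ν : Measure X)
    (c : X × X → ℝ≥0∞)
    (ℓ g : X → ℝ)
    (hℓ : Integrable ℓ ν) (hg : Integrable g μ)
    (lam δ : ℝ) (hlam : 0 ≤ lam) (hδ : 0 ≤ δ)
    (γ : Measure (X × X))
    (hfst : γ.fst = μ) (hsnd : γ.snd = ν)
    (hcost : ∫⁻ p, c p ∂γ ≤ ENNReal.ofReal δ)
    (hpt : ∀ x z, ENNReal.ofReal (ℓ z - g x) ≤ ENNReal.ofReal lam * c (x, z)) :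
    ∫ z, ℓ z ∂ν ≤ lam * δ + ∫ x, g x ∂μ := by
  subst hfst hsnd
  have hgap : ∫ p, (ℓ p.2 - g p.1) ∂γ ≤ lam * δ := by
    refine integral_le_of_lintegral_ofReal_le (mul_nonneg hlam hδ)
      (hℓ.comp_snd_of_integrable_snd.sub hg.comp_fst_of_integrable_fst) ?_
    calc ∫⁻ p, ENNReal.ofReal (ℓ p.2 - g p.1) ∂γ
        ≤ ∫⁻ p, ENNReal.ofReal lam * c p ∂γ := lintegral_mono fun p => hpt p.1 p.2
      _ = ENNReal.ofReal lam * ∫⁻ p, c p ∂γ := lintegral_const_mul' _ _ ENNReal.ofReal_ne_top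
      _ ≤ ENNReal.ofReal lam * ENNReal.ofReal δ := by gcongr
      _ = ENNReal.ofReal (lam * δ) := (ENNReal.ofReal_mul hlam).symm
  rw [integral_sub hℓ.comp_snd_of_integrable_snd hg.comp_fst_of_integrable_fst,
    integral_comp_snd_eq hℓ.aestronglyMeasurable,
    integral_comp_fst_eq hg.aestronglyMeasurable] at hgap
  linarith

/-- weak duality for Wasserstein DRO. If `γ` is a coupling of `μ`
and `ν` with transport cost at most `δ`, and `ℓ(z) ≤ g(x) + λ c(x,z)` pointwise
(stated in the extended nonnegative reals, with the convention `0·∞ = 0`),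
then `∫ ℓ dν ≤ λδ + ∫ g dμ`. -/
theorem stmt_15 {X : Type*} [MeasurableSpace X] (μ ν : Measure X)
    [IsProbabilityMeasure μ] [IsProbabilityMeasure ν]
    (c : X × X → ℝ≥0∞) (hc : Measurable c)
    (ℓ g : X → ℝ) (hℓm : Measurable ℓ) (hgm : Measurable g)
    (hℓ : Integrable ℓ ν) (hg : Integrable g μ)
    (lam δ : ℝ) (hlam : 0 ≤ lam) (hδ : 0 ≤ δ)
    (γ : Measure (X × X)) [IsProbabilityMeasure γ]
    (hfst : γ.fst = μ) (hsnd : γ.snd = ν)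
    (hcost : ∫⁻ p, c p ∂γ ≤ ENNReal.ofReal δ)
    (hpt : ∀ x z, ENNReal.ofReal (ℓ z - g x) ≤ ENNReal.ofReal lam * c (x, z)) :
    ∫ z, ℓ z ∂ν ≤ lam * δ + ∫ x, g x ∂μ :=
  stmt_15_general μ ν c ℓ g hℓ hg lam δ hlam hδ γ hfst hsnd hcost hpt
end
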